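/- arXiv:1006.1090 — 7 statements merged into one kernel-verified Lean document; each statement's English description precedes it below -/
import Mathlib

section
/- Let r and s be coprime integers with 2 ≤ r < s, let S be the numerical semigroup generated by r and s, and let g = (r−1)(s−1)/2. Then the number of gaps of S (positive integers not belonging to S) is exactly g. -/
/-- Membership in the numerical semigroup generated by `r` and `s`. -/
def inSg (r s n : ℕ) : Prop := ∃ a b : ℕ, n = a * r + b * s

lemma exists_res (r s n : ℕ) (hs : 0 < s) (hco : Nat.Coprime r s) :
    ∃ a, a < s ∧ a * r ≡ n [MOD s] := by
  haveI : NeZero s := ⟨hs.ne'⟩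
  refine ⟨((n : ZMod s) * (r : ZMod s)⁻¹).val, ZMod.val_lt _, ?_⟩
  have h1 : (r : ZMod s) * (r : ZMod s)⁻¹ = 1 := ZMod.coe_mul_inv_eq_one r hco
  have h2 : ((((n : ZMod s) * (r : ZMod s)⁻¹).val * r : ℕ) : ZMod s) = (n : ZMod s) := by
    push_cast
    rw [ZMod.natCast_val, ZMod.cast_id, mul_assoc, mul_comm (r : ZMod s)⁻¹, h1, mul_one]
  exact (ZMod.natCast_eq_natCast_iff _ _ _).mp h2

lemma notF (r s : ℕ) (hr : 2 ≤ r) (hrs : r < s) (hco : Nat.Coprime r s) :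
    ¬ inSg r s (r * s - r - s) := by
  rintro ⟨a, b, hab⟩
  have hrs' : r + s ≤ r * s := Nat.add_le_mul hr (by omega)
  have heq : a * r + b * s + r + s = r * s := by omega
  have ha1 : (a + 1) * r = a * r + r := by ring
  have hb1 : (b + 1) * s = b * s + s := by ring
  have hdvd : s ∣ (a + 1) * r := by
    have h0 : (a + 1) * r = r * s - (b + 1) * s := by omega
    rw [h0]
    exact Nat.dvd_sub ⟨r, mul_comm r s⟩ ⟨b + 1, mul_comm _ _⟩
  have hdvd2 : s ∣ a + 1 := (Nat.Coprime.dvd_of_dvd_mul_right (hco.symm)) hdvd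
  have h3 : s ≤ a + 1 := Nat.le_of_dvd (by omega) hdvd2
  have h4 : (s - 1) * r ≤ a * r := Nat.mul_le_mul_right r (by omega)
  have h5 : (s - 1) * r = s * r - r := by rw [Nat.sub_mul, one_mul]
  have h6 : r ≤ s * r := Nat.le_mul_of_pos_left r (by omega)
  have : s * r = r * s := mul_comm s r
  omega

/-- gaps have a canonical "negative" representation -/
lemma gap_rep (r s n : ℕ) (hr : 2 ≤ r) (hrs : r < s) (hco : Nat.Coprime r s)
    (hn : ¬ inSg r s n) : ∃ a c, a < s ∧ 1 ≤ c ∧ n + c * s = a * r := by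
  obtain ⟨a, has, hmod⟩ := exists_res r s n (by omega) hco
  rcases le_or_gt (a * r) n with h | h
  · exfalso
    have hdvd : s ∣ n - a * r := (Nat.modEq_iff_dvd' h).mp hmod
    obtain ⟨b, hb⟩ := hdvd
    have := mul_comm s b
    exact hn ⟨a, b, by omega⟩
  · have hdvd : s ∣ a * r - n := (Nat.modEq_iff_dvd' h.le).mp hmod.symm
    obtain ⟨c, hc⟩ := hdvd
    have hcs := mul_comm s c
    rcases Nat.eq_zero_or_pos c with rfl | hcp
    · simp at hc; omega
    · exact ⟨a, c, has, hcp, by omega⟩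

lemma big_mem (r s n : ℕ) (hr : 2 ≤ r) (hrs : r < s) (hco : Nat.Coprime r s)
    (hn : r * s - r - s < n) : inSg r s n := by
  by_contra h
  obtain ⟨a, c, has, hc, heq⟩ := gap_rep r s n hr hrs hco h
  have h4 : a * r ≤ (s - 1) * r := Nat.mul_le_mul_right r (by omega)
  have h5 : (s - 1) * r = s * r - r := by rw [Nat.sub_mul, one_mul]
  have h6 : r ≤ s * r := Nat.le_mul_of_pos_left r (by omega)
  have h7 : s ≤ c * s := Nat.le_mul_of_pos_left s (by omega)
  have h8 : s * r = r * s := mul_comm s r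
  have hrs' : r + s ≤ r * s := Nat.add_le_mul hr (by omega)
  omega

lemma sym (r s n : ℕ) (hr : 2 ≤ r) (hrs : r < s) (hco : Nat.Coprime r s)
    (hn : n ≤ r * s - r - s) :
    inSg r s n ↔ ¬ inSg r s (r * s - r - s - n) := by
  set F := r * s - r - s with hF
  constructor
  · rintro ⟨a, b, rfl⟩ ⟨a', b', h'⟩
    refine notF r s hr hrs hco ⟨a + a', b + b', ?_⟩
    have e1 : (a + a') * r = a * r + a' * r := add_mul a a' r
    have e2 : (b + b') * s = b * s + b' * s := add_mul b b' s
    omega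
  · intro h
    by_contra hn2
    obtain ⟨a, c, has, hc, heq⟩ := gap_rep r s n hr hrs hco hn2
    apply h
    refine ⟨s - 1 - a, c - 1, ?_⟩
    have h4 : a * r ≤ (s - 1) * r := Nat.mul_le_mul_right r (by omega)
    have h5 : (s - 1) * r = s * r - r := by rw [Nat.sub_mul, one_mul]
    have h5' : (s - 1 - a) * r = (s - 1) * r - a * r := by rw [Nat.sub_mul]
    have h6 : r ≤ s * r := Nat.le_mul_of_pos_left r (by omega)
    have h7 : (c - 1) * s = c * s - s := by rw [Nat.sub_mul, one_mul]
    have h7' : s ≤ c * s := Nat.le_mul_of_pos_left s (by omega)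
    have h8 : s * r = r * s := mul_comm s r
    have hrs' : r + s ≤ r * s := Nat.add_le_mul hr (by omega)
    omega

/-- The number of gaps (positive integers not in the numerical semigroup
generated by coprime `r < s`) is exactly `g = (r-1)(s-1)/2`. -/
theorem gaps_card (r s g : ℕ) (hr : 2 ≤ r) (hrs : r < s)
    (hco : Nat.Coprime r s) (hg : 2 * g = (r - 1) * (s - 1)) :
    {n : ℕ | 0 < n ∧ ¬ inSg r s n}.ncard = g := by
  classical
  set F := r * s - r - s with hF
  have hrs' : r + s ≤ r * s := Nat.add_le_mul hr (by omega)
  set N := F + 1 with hN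
  set B := (Finset.range N).filter (fun n => ¬ inSg r s n) with hB
  set A := (Finset.range N).filter (fun n => inSg r s n) with hA
  have hset : {n : ℕ | 0 < n ∧ ¬ inSg r s n} = ↑B := by
    ext n
    simp only [Set.mem_setOf_eq, hB, Finset.coe_filter, Finset.mem_range]
    constructor
    · rintro ⟨hpos, hns⟩
      refine ⟨?_, hns⟩
      by_contra hbig
      exact hns (big_mem r s n hr hrs hco (by omega))
    · rintro ⟨hlt, hns⟩
      refine ⟨?_, hns⟩
      rcases Nat.eq_zero_or_pos n with rfl | h
      · exact absurd ⟨0, 0, by simp⟩ hns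
      · exact h
  rw [hset, Set.ncard_coe_finset]
  have hcard : A.card = B.card := by
    apply Finset.card_bij (fun n _ => F - n)
    · intro n hn
      simp only [hA, Finset.mem_filter, Finset.mem_range] at hn
      simp only [hB, Finset.mem_filter, Finset.mem_range]
      exact ⟨by omega, ((sym r s n hr hrs hco (by omega)).mp hn.2)⟩
    · intro n₁ h₁ n₂ h₂ h
      simp only [hA, Finset.mem_filter, Finset.mem_range] at h₁ h₂
      omega
    · intro m hm
      simp only [hB, Finset.mem_filter, Finset.mem_range] at hm
      refine ⟨F - m, ?_, by omega⟩
      simp only [hA, Finset.mem_filter, Finset.mem_range]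
      refine ⟨by omega, ?_⟩
      by_contra h
      exact hm.2 ((sym r s m hr hrs hco (by omega)).mpr h)
  have hsum : A.card + B.card = N := by
    rw [hA, hB]
    simpa using Finset.card_filter_add_card_filter_not
      (s := Finset.range N) (p := fun n => inSg r s n)
  have hNval : N = (r - 1) * (s - 1) := by
    have : (r - 1) * (s - 1) = r * s - r - s + 1 := by
      cases' r with r0
      · omega
      cases' s with s0
      · omega
      simp only [Nat.succ_sub_one]
      have : (r0 + 1) * (s0 + 1) = r0 * s0 + r0 + s0 + 1 := by ring
      omega
    omega
  omega
end

section
/- Let r and s be coprime integers with 2 ≤ r < s, let S be the numerical semigroup generated by r and s, and let g = (r−1)(s−1)/2. Then S is symmetric: for every integer n with 0 ≤ n ≤ 2g−1, n belongs to S if and only if 2g−1−n does not belong to S. -/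
/-- Integer version of membership. -/
def InS (r s n : ℤ) : Prop := ∃ a b : ℤ, 0 ≤ a ∧ 0 ≤ b ∧ n = a * r + b * s

lemma inSg_iff_InS (r s n : ℕ) : inSg r s n ↔ InS r s n := by
  constructor
  · rintro ⟨a, b, rfl⟩
    exact ⟨a, b, Int.natCast_nonneg a, Int.natCast_nonneg b, by push_cast; ring⟩
  · rintro ⟨a, b, ha, hb, h⟩
    refine ⟨a.toNat, b.toNat, ?_⟩
    have h2 : (n : ℤ) = ((a.toNat * r + b.toNat * s : ℕ) : ℤ) := by
      push_cast
      rw [Int.toNat_of_nonneg ha, Int.toNat_of_nonneg hb]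
      exact h
    exact_mod_cast h2

/-- Canonical representation: `n = a*r + b*s` with `0 ≤ a < s`. -/
lemma canonical (r s : ℤ) (hs : 0 < s) (hco : IsCoprime r s) (n : ℤ) :
    ∃ a b : ℤ, 0 ≤ a ∧ a < s ∧ n = a * r + b * s := by
  obtain ⟨x, y, hxy⟩ := hco
  set a := (n * x) % s with ha
  set q := (n * x) / s with hq
  have ha' : a = n * x - s * q := Int.emod_def (n * x) s
  refine ⟨a, n * y + q * r, Int.emod_nonneg _ hs.ne', Int.emod_lt_of_pos _ hs, ?_⟩
  rw [ha']
  linear_combination (-n) * hxy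

lemma mem_canonical (r s : ℤ) (hr : 0 < r) (hs : 0 < s) (hco : IsCoprime r s)
    (a b : ℤ) (ha0 : 0 ≤ a) (has : a < s) :
    InS r s (a * r + b * s) ↔ 0 ≤ b := by
  constructor
  · rintro ⟨a', b', ha', hb', h⟩
    have hsd : s ∣ (a' - a) := by
      have hd : s ∣ (a' - a) * r := ⟨b - b', by linear_combination -h⟩
      exact hco.symm.dvd_of_dvd_mul_right hd
    obtain ⟨k, hk⟩ := hsd
    have hk0 : 0 ≤ k := by
      by_contra hneg
      push_neg at hneg
      have hk1 : k ≤ -1 := by omega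
      have h2 : s * k ≤ s * (-1) := mul_le_mul_of_nonneg_left hk1 hs.le
      linarith
    have hb : b = k * r + b' := by
      have heq : b * s = (k * r + b') * s := by
        have ha2 : a' = a + s * k := by linarith
        rw [ha2] at h
        linear_combination h
      exact mul_right_cancel₀ hs.ne' heq
    rw [hb]
    have : 0 ≤ k * r := mul_nonneg hk0 hr.le
    omega
  · intro hb
    exact ⟨a, b, ha0, hb, rfl⟩

lemma symm_int (r s : ℤ) (hr : 0 < r) (hs : 0 < s) (hco : IsCoprime r s) (n : ℤ) :
    InS r s n ↔ ¬ InS r s (r * s - r - s - n) := by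
  obtain ⟨a, b, ha0, has, rfl⟩ := canonical r s hs hco n
  have h2 : r * s - r - s - (a * r + b * s) = (s - 1 - a) * r + (-1 - b) * s := by ring
  rw [mem_canonical r s hr hs hco a b ha0 has, h2,
    mem_canonical r s hr hs hco _ _ (by omega) (by omega)]
  omega

/-- The numerical semigroup generated by coprime `r < s` is symmetric:
for `0 ≤ n ≤ 2g - 1`, `n` belongs to the semigroup iff `2g - 1 - n` does not. -/
theorem semigroup_symmetric (r s g : ℕ)
    (hr : 2 ≤ r) (hrs : r < s) (hco : Nat.Coprime r s)
    (hg : 2 * g = (r - 1) * (s - 1)) :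
    ∀ n : ℕ, n ≤ 2 * g - 1 → (inSg r s n ↔ ¬ inSg r s (2 * g - 1 - n)) := by
  intro n hn
  have hr' : (0:ℤ) < r := by exact_mod_cast (by omega : 0 < r)
  have hs' : (0:ℤ) < s := by exact_mod_cast (by omega : 0 < s)
  have hco' : IsCoprime (r:ℤ) (s:ℤ) := Nat.isCoprime_iff_coprime.mpr hco
  have hgz : 2 * (g:ℤ) = ((r:ℤ) - 1) * ((s:ℤ) - 1) := by
    have := hg
    zify [show 1 ≤ r by omega, show 1 ≤ s by omega] at this
    exact_mod_cast this
  have h2g : 2 ≤ 2 * g := by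
    have h1 : 1 ≤ r - 1 := by omega
    have h2 : 2 ≤ s - 1 := by omega
    have := Nat.mul_le_mul h1 h2
    omega
  have key : ((2 * g - 1 - n : ℕ) : ℤ) = 2 * (g:ℤ) - 1 - n := by omega
  have key2 : 2 * (g:ℤ) - 1 - (n:ℤ) = (r:ℤ) * s - r - s - n := by
    rw [hgz]; ring
  rw [inSg_iff_InS, inSg_iff_InS, key, key2]
  exact symm_int (r:ℤ) (s:ℤ) hr' hs' hco' n
end

section
/- Let r and s be coprime integers with 2 ≤ r < s, g = (r−1)(s−1)/2, N the increasing enumeration of the numerical semigroup generated by r and s, and Λ_i = g − N(i−1) + (i−1) for i = 1, …, g. Then Λ = (Λ_1, …, Λ_g) is a partition (Λ_1 ≥ Λ_2 ≥ … ≥ Λ_g ≥ 1) which is self-conjugate: its conjugate partition Λ′, defined by Λ′_j = #{i : Λ_i ≥ j}, equals Λ. -/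
/-- The Young diagram row lengths `Λ i = g - N(i-1) + (i-1)` attached to the
Weierstrass gap sequence. -/
def Lam (g : ℕ) (N : ℕ → ℕ) (i : ℕ) : ℕ := g + (i - 1) - N (i - 1)

/-!
The semigroup `S = ⟨r, s⟩` is symmetric about its Frobenius number `F = rs - r - s`: whenever
`m + n = F`, exactly one of `m`, `n` lies in `S`. For the counting function
`c x = #(S ∩ [0, x))` this gives `c x + c (F + 1) = x + c (F + 1 - x)`, hence `c (F + 1) = g`
and `Λ (k + 1) = c (F - N k)`. So the cell `(k + 1, l + 1)` lies in the diagram iff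
`N l < F - N k`, i.e. iff `N k + N l < F`; this is symmetric in `k` and `l`, so the diagram is
its own transpose.
-/

open Finset Nat

def SymmetricAbout (p : ℕ → Prop) (F : ℕ) : Prop := ∀ m n, m + n = F → (p m ↔ ¬p n)

section Semigroup

variable {r s : ℕ}

theorem inSg_zero (r s : ℕ) : inSg r s 0 := ⟨0, 0, by simp⟩

theorem inSg_add {m n : ℕ} (hm : inSg r s m) (hn : inSg r s n) : inSg r s (m + n) := by
  obtain ⟨a, b, rfl⟩ := hm
  obtain ⟨c, d, rfl⟩ := hn
  exact ⟨a + c, b + d, by ring⟩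

theorem not_inSg_of_add_add_eq_mul (hco : r.Coprime s) {F : ℕ} (hF : F + r + s = r * s) :
    ¬inSg r s F := by
  rintro ⟨a, b, rfl⟩
  have hsum : (a + 1) * r + (b + 1) * s = r * s := by linarith
  have hr : r ≤ b + 1 := by
    refine le_of_dvd (succ_pos b) (hco.dvd_of_dvd_mul_right ?_)
    exact (Nat.dvd_add_right (dvd_mul_left r (a + 1))).mp (hsum ▸ dvd_mul_right r s)
  have hs : s ≤ a + 1 := by
    refine le_of_dvd (succ_pos a) (hco.symm.dvd_of_dvd_mul_right ?_)
    exact (Nat.dvd_add_left (dvd_mul_left s (b + 1))).mp (hsum ▸ dvd_mul_left s r)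
  have hrs : r * s = 0 := by nlinarith
  obtain ⟨rfl, rfl⟩ : r = 0 ∧ s = 0 := by constructor <;> nlinarith
  simp at hco

theorem exists_eq_mul_add_mul_of_coprime (hco : r.Coprime s) (hs : 0 < s) (n : ℤ) :
    ∃ a t : ℤ, 0 ≤ a ∧ a < s ∧ n = a * r + t * s := by
  have hbezout : (1 : ℤ) = r * gcdA r s + s * gcdB r s := by
    have := Nat.gcd_eq_gcd_ab r s
    rwa [hco.gcd_eq_one, Nat.cast_one] at this
  have hs' : (0 : ℤ) < s := by exact_mod_cast hs
  refine ⟨n * gcdA r s % s, n * gcdB r s + n * gcdA r s / s * r,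
    Int.emod_nonneg _ hs'.ne', Int.emod_lt_of_pos _ hs', ?_⟩
  linear_combination n * hbezout - r * Int.emod_add_mul_ediv (n * gcdA r s) s

theorem inSg_or_inSg_of_add_add_eq_mul (hco : r.Coprime s) {m n : ℕ}
    (h : m + n + r + s = r * s) : inSg r s m ∨ inSg r s n := by
  have hs : 0 < s := by
    rcases Nat.eq_zero_or_pos s with rfl | hs
    · simp at hco
      omega
    · exact hs
  obtain ⟨a, t, ha, has, hm⟩ := exists_eq_mul_add_mul_of_coprime hco hs m
  rcases le_or_gt 0 t with ht | ht
  · left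
    refine ⟨a.toNat, t.toNat, ?_⟩
    zify
    rw [Int.toNat_of_nonneg ha, Int.toNat_of_nonneg ht]
    exact hm
  · -- `n = F - m = (s - 1 - a) r + (-t - 1) s`
    right
    refine ⟨(s - 1 - a).toNat, (-t - 1).toNat, ?_⟩
    have hZ : (m : ℤ) + n + r + s = r * s := by exact_mod_cast h
    zify
    rw [Int.toNat_of_nonneg (by omega), Int.toNat_of_nonneg (by omega)]
    linear_combination hZ - hm

theorem symmetricAbout_inSg (hco : r.Coprime s) {F : ℕ} (hF : F + r + s = r * s) :
    SymmetricAbout (inSg r s) F := fun m n h =>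
  ⟨fun hm hn => not_inSg_of_add_add_eq_mul hco hF (h ▸ inSg_add hm hn),
    (inSg_or_inSg_of_add_add_eq_mul hco (by omega)).resolve_right⟩

end Semigroup

theorem StrictMono.eq_nth {p : ℕ → Prop} {f : ℕ → ℕ} (hf : StrictMono f) (hmem : ∀ n, p (f n))
    (hsurj : ∀ m, p m → ∃ n, f n = m) : f = nth p := by
  have hp : (Set.ofPred p).Infinite := Set.infinite_of_injective_forall_mem hf.injective hmem
  refine (hf.range_inj (nth_strictMono hp)).mp ?_
  rw [range_nth_of_infinite hp]
  ext m
  exact ⟨by rintro ⟨n, rfl⟩; exact hmem n, hsurj m⟩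

section SymmetricAbout

variable {p : ℕ → Prop} [DecidablePred p] {F : ℕ}

theorem SymmetricAbout.count_add_count_eq (hsym : SymmetricAbout p F) :
    ∀ x y, x + y = F + 1 → count p x + count p (F + 1) = x + count p y := by
  intro x
  induction x with
  | zero => intro y h; simp [← h]
  | succ x ih =>
    intro y h
    have hxy := hsym x y (by omega)
    have := ih (y + 1) (by omega)
    rw [count_succ _ x]
    rw [count_succ _ y] at this
    by_cases hx : p x <;> simp_all <;> omega

theorem SymmetricAbout.two_mul_count (hsym : SymmetricAbout p F) :
    2 * count p (F + 1) = F + 1 := by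
  have := hsym.count_add_count_eq (F + 1) 0 rfl
  rw [count_zero] at this
  omega

theorem SymmetricAbout.Lam_nth_eq_count (hsym : SymmetricAbout p F)
    (hp : (Set.ofPred p).Infinite) {g i : ℕ} (hg : count p (F + 1) = g) (hi : i ∈ Icc 1 g) :
    Lam g (nth p) i = count p (F - nth p (i - 1)) := by
  subst hg
  rw [mem_Icc] at hi
  have hlt : nth p (i - 1) < F + 1 := nth_lt_of_lt_count (by omega)
  have := hsym.count_add_count_eq (nth p (i - 1) + 1) (F - nth p (i - 1)) (by omega)
  rw [count_nth_succ_of_infinite hp] at this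
  unfold Lam
  omega

end SymmetricAbout

theorem lt_count_sub_nth_comm {p : ℕ → Prop} [DecidablePred p] (hp : (Set.ofPred p).Infinite)
    {F k l : ℕ} : l < count p (F - nth p k) ↔ k < count p (F - nth p l) := by
  rw [lt_nth_iff_count_lt hp, lt_nth_iff_count_lt hp]
  omega

section Transpose

variable {f : ℕ → ℕ} {g : ℕ}

theorem antitoneOn_of_le_iff_le (hle : ∀ i ∈ Icc 1 g, f i ≤ g)
    (htr : ∀ i ∈ Icc 1 g, ∀ j ∈ Icc 1 g, j ≤ f i ↔ i ≤ f j) : AntitoneOn f (Icc 1 g) := by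
  intro i hi j hj hij
  rcases Nat.eq_zero_or_pos (f j) with h | h
  · omega
  have hfj : f j ∈ Icc 1 g := mem_Icc.mpr ⟨h, hle j hj⟩
  exact (htr i hi _ hfj).mpr (hij.trans ((htr j hj _ hfj).mp le_rfl))

theorem card_filter_le_eq_of_le_iff_le (hle : ∀ i ∈ Icc 1 g, f i ≤ g)
    (htr : ∀ i ∈ Icc 1 g, ∀ j ∈ Icc 1 g, j ≤ f i ↔ i ≤ f j) {j : ℕ} (hj : j ∈ Icc 1 g) :
    #{i ∈ Icc 1 g | j ≤ f i} = f j := by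
  have : {i ∈ Icc 1 g | j ≤ f i} = Icc 1 (f j) := by
    ext i
    simp only [mem_filter, mem_Icc]
    constructor
    · rintro ⟨hi, hji⟩
      exact ⟨hi.1, (htr i (mem_Icc.mpr hi) j hj).mp hji⟩
    · rintro ⟨hi₁, hij⟩
      have hi : i ∈ Icc 1 g := mem_Icc.mpr ⟨hi₁, hij.trans (hle j hj)⟩
      exact ⟨mem_Icc.mp hi, (htr i hi j hj).mpr hij⟩
  rw [this, card_Icc]
  omega

end Transpose

/-- `Λ = (Λ_1, …, Λ_g)` is a partition (weakly decreasing with all parts ≥ 1)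
which is self-conjugate: the conjugate partition `Λ'_j = #{i : Λ_i ≥ j}`
equals `Λ` (including the vanishing of parts beyond the `g`-th). -/
theorem young_diagram_self_conjugate (r s g : ℕ) (N : ℕ → ℕ)
    (hr : 2 ≤ r) (hrs : r < s) (hco : Nat.Coprime r s)
    (hg : 2 * g = (r - 1) * (s - 1))
    (hmono : StrictMono N)
    (hmem : ∀ n, inSg r s (N n))
    (hsurj : ∀ m, inSg r s m → ∃ n, N n = m) :
    (∀ i j : ℕ, 1 ≤ i → i ≤ j → j ≤ g → Lam g N j ≤ Lam g N i) ∧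
    1 ≤ Lam g N g ∧
    (∀ j : ℕ, 1 ≤ j → j ≤ g →
      ((Finset.Icc 1 g).filter (fun i => j ≤ Lam g N i)).card = Lam g N j) ∧
    (∀ j : ℕ, g < j →
      ((Finset.Icc 1 g).filter (fun i => j ≤ Lam g N i)).card = 0) := by
  classical
  obtain ⟨F, hF, hgF⟩ : ∃ F, F + r + s = r * s ∧ F + 1 = 2 * g := by
    obtain ⟨r, rfl⟩ : ∃ r', r = r' + 2 := ⟨r - 2, by omega⟩
    obtain ⟨s, rfl⟩ : ∃ s', s = s' + 2 := ⟨s - 2, by omega⟩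
    rw [show r + 2 - 1 = r + 1 by omega, show s + 2 - 1 = s + 1 by omega] at hg
    exact ⟨r * s + r + s, by ring, by rw [hg]; ring⟩
  have hp : (Set.ofPred (inSg r s)).Infinite :=
    Set.infinite_of_injective_forall_mem hmono.injective hmem
  obtain rfl : N = nth (inSg r s) := hmono.eq_nth hmem hsurj
  have hsym := symmetricAbout_inSg hco hF
  have hG : count (inSg r s) (F + 1) = g := by have := hsym.two_mul_count; omega
  have hLam := fun i (hi : i ∈ Icc 1 g) => hsym.Lam_nth_eq_count hp hG hi
  have hle : ∀ i ∈ Icc 1 g, Lam g (nth (inSg r s)) i ≤ g := fun i hi =>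
    hG ▸ (hLam i hi).trans_le (count_monotone _ (by omega))
  have htr : ∀ i ∈ Icc 1 g, ∀ j ∈ Icc 1 g,
      j ≤ Lam g (nth (inSg r s)) i ↔ i ≤ Lam g (nth (inSg r s)) j := by
    intro i hi j hj
    rw [hLam i hi, hLam j hj]
    have := lt_count_sub_nth_comm hp (F := F) (k := i - 1) (l := j - 1)
    rw [mem_Icc] at hi hj
    omega
  have hLam_one : Lam g (nth (inSg r s)) 1 = g := by
    simp [Lam, nth_zero_of_zero (inSg_zero r s)]
  refine ⟨fun i j hi hij hj => ?_, ?_, fun j hj₁ hj₂ => ?_, fun j hj => ?_⟩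
  · exact antitoneOn_of_le_iff_le hle htr (mem_Icc.mpr ⟨hi, hij.trans hj⟩)
      (mem_Icc.mpr ⟨hi.trans hij, hj⟩) hij
  · exact (htr g (mem_Icc.mpr ⟨by omega, le_rfl⟩) 1 (mem_Icc.mpr ⟨le_rfl, by omega⟩)).mpr
      hLam_one.ge
  · exact card_filter_le_eq_of_le_iff_le hle htr (mem_Icc.mpr ⟨hj₁, hj₂⟩)
  · exact card_eq_zero.mpr (filter_eq_empty_iff.mpr fun i hi => by have := hle i hi; omega)
end

section
/- For integers 1 ≤ ℓ₁ < ℓ₂, every integer m with 0 ≤ m ≤ ℓ₂ − ℓ₁, and every integer n, one has the identity h_n^{⟨ℓ₁,ℓ₂⟩} = Σ_{j=0}^{m} h_{n−j}^{⟨ℓ₁+m−j, ℓ₂⟩} · h_j^{⟨ℓ₁, ℓ₁+m−j⟩} of polynomials in t_{ℓ₁}, …, t_{ℓ₂} over any commutative ring. (The case m = ℓ₂ − ℓ₁ gives h_n^{⟨ℓ₁,ℓ₂⟩} = h_n^{⟨ℓ₂,ℓ₂⟩} + h_{n−1}^{⟨ℓ₂−1,ℓ₂⟩}h_1^{⟨ℓ₁,ℓ₂−1⟩}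 + … + h_{n−ℓ₂+ℓ₁}^{⟨ℓ₁,ℓ₂⟩}h_{ℓ₂−ℓ₁}^{⟨ℓ₁,ℓ₁⟩}.) -/
/-- `hpoly R a b n` is the complete homogeneous symmetric polynomial of degree
`n` in the variables `t_a, …, t_b` (the sum of all monomials of total degree
`n` in these variables), with `hpoly R a b n = 0` for `n < 0`. -/
noncomputable def hpoly (R : Type*) [CommRing R] (a b : ℕ) (n : ℤ) :
    MvPolynomial ℕ R :=
  if 0 ≤ n then
    ∑ d ∈ (Finset.Icc a b).sym n.toNat, (Multiset.map MvPolynomial.X d.1).prod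
  else 0

section Aux

variable {R : Type*} [CommRing R]

private lemma hpoly_neg {a b : ℕ} {n : ℤ} (hn : n < 0) : hpoly R a b n = 0 := by
  rw [hpoly, if_neg (by omega)]

private lemma hpoly_zero (a b : ℕ) : hpoly R a b 0 = 1 := by
  simp [hpoly]
  rfl

private lemma hpoly_ofNat (a b : ℕ) (k : ℕ) :
    hpoly R a b (k : ℤ)
      = ∑ d ∈ (Finset.Icc a b).sym k, (Multiset.map MvPolynomial.X d.1).prod := by
  rw [hpoly, if_pos (by positivity)]
  simp

private lemma hpoly_of_lt {a b : ℕ} (hba : b < a) {n : ℤ} (hn : 0 < n) :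
    hpoly R a b n = 0 := by
  obtain ⟨k, rfl⟩ : ∃ k : ℕ, n = (k : ℤ) := ⟨n.toNat, by omega⟩
  rw [hpoly_ofNat, Finset.Icc_eq_empty (by omega),
    Finset.sym_eq_empty.2 ⟨by omega, rfl⟩, Finset.sum_empty]

private lemma sym_sum_split (s : Finset ℕ) (x : ℕ) (hx : x ∈ s) (k : ℕ) :
    ∑ d ∈ s.sym (k + 1), (Multiset.map (MvPolynomial.X (R := R)) d.1).prod
      = (∑ d ∈ (s.erase x).sym (k + 1), (Multiset.map MvPolynomial.X d.1).prod)
        + MvPolynomial.X x * ∑ d ∈ s.sym k, (Multiset.map MvPolynomial.X d.1).prod := by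
  classical
  rw [← Finset.sum_filter_add_sum_filter_not (s.sym (k + 1)) (fun d => x ∈ d), add_comm]
  congr 1
  · apply Finset.sum_congr _ (fun _ _ => rfl)
    ext d
    simp only [Finset.mem_filter, Finset.mem_sym_iff, Finset.mem_erase]
    constructor
    · rintro ⟨hd, hxd⟩ a ha
      exact ⟨fun h => hxd (h ▸ ha), hd a ha⟩
    · intro h
      exact ⟨fun a ha => (h a ha).2, fun hxd => (h x hxd).1 rfl⟩
  · have himg : (s.sym (k + 1)).filter (fun d => x ∈ d) = (s.sym k).image (Sym.cons x) := by
      ext d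
      simp only [Finset.mem_filter, Finset.mem_image, Finset.mem_sym_iff]
      constructor
      · rintro ⟨hd, hxd⟩
        refine ⟨d.erase x hxd, fun a ha => hd a ?_, Sym.cons_erase hxd⟩
        have : a ∈ (d : Multiset ℕ).erase x := ha
        exact Multiset.mem_of_mem_erase this
      · rintro ⟨d', hd', rfl⟩
        refine ⟨fun a ha => ?_, Sym.mem_cons_self x d'⟩
        rcases Sym.mem_cons.1 ha with rfl | h
        · exact hx
        · exact hd' a h
    rw [himg, Finset.sum_image (fun a _ b _ h => (Sym.cons_inj_right x a b).1 h),
      Finset.mul_sum]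
    exact Finset.sum_congr rfl fun d _ => by
      simp [Sym.coe_cons, Multiset.map_cons, Multiset.prod_cons]

/-- `h_n⟨a,b⟩ = h_n⟨a+1,b⟩ + X a * h_{n-1}⟨a,b⟩` for `a ≤ b`. -/
private lemma hpoly_recA {a b : ℕ} (hab : a ≤ b) (n : ℤ) :
    hpoly R a b n = hpoly R (a + 1) b n + MvPolynomial.X a * hpoly R a b (n - 1) := by
  rcases lt_trichotomy n 0 with hn | rfl | hn
  · rw [hpoly_neg hn, hpoly_neg hn, hpoly_neg (by omega), mul_zero, add_zero]
  · rw [hpoly_zero, hpoly_zero, hpoly_neg (by omega), mul_zero, add_zero]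
  · obtain ⟨k, rfl⟩ : ∃ k : ℕ, n = ((k + 1 : ℕ) : ℤ) := ⟨(n - 1).toNat, by omega⟩
    have h2 : ((k + 1 : ℕ) : ℤ) - 1 = (k : ℤ) := by push_cast; ring
    rw [h2, hpoly_ofNat, hpoly_ofNat, hpoly_ofNat]
    have herase : Finset.Icc (a + 1) b = (Finset.Icc a b).erase a := by
      rw [Finset.Icc_erase_left, Finset.Icc_add_one_left_eq_Ioc]
    rw [herase]
    exact sym_sum_split _ a (Finset.mem_Icc.2 ⟨le_rfl, hab⟩) k

/-- `h_n⟨a,b+1⟩ = h_n⟨a,b⟩ + X (b+1) * h_{n-1}⟨a,b+1⟩` for `a ≤ b + 1`. -/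
private lemma hpoly_recB {a b : ℕ} (hab : a ≤ b + 1) (n : ℤ) :
    hpoly R a (b + 1) n
      = hpoly R a b n + MvPolynomial.X (b + 1) * hpoly R a (b + 1) (n - 1) := by
  rcases lt_trichotomy n 0 with hn | rfl | hn
  · rw [hpoly_neg hn, hpoly_neg hn, hpoly_neg (by omega), mul_zero, add_zero]
  · rw [hpoly_zero, hpoly_zero, hpoly_neg (by omega), mul_zero, add_zero]
  · obtain ⟨k, rfl⟩ : ∃ k : ℕ, n = ((k + 1 : ℕ) : ℤ) := ⟨(n - 1).toNat, by omega⟩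
    have h2 : ((k + 1 : ℕ) : ℤ) - 1 = (k : ℤ) := by push_cast; ring
    rw [h2, hpoly_ofNat, hpoly_ofNat, hpoly_ofNat]
    have herase : Finset.Icc a b = (Finset.Icc a (b + 1)).erase (b + 1) := by
      rw [Finset.Icc_erase_right, Finset.Ico_add_one_right_eq_Icc]
    rw [herase]
    exact sym_sum_split _ (b + 1) (Finset.mem_Icc.2 ⟨hab, le_rfl⟩) k

private lemma hpoly_diag_succ (a : ℕ) (k : ℕ) :
    hpoly R a a ((k : ℤ) + 1) = MvPolynomial.X a * hpoly R a a (k : ℤ) := by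
  have := hpoly_recA (R := R) (le_refl a) ((k : ℤ) + 1)
  rw [hpoly_of_lt (a := a + 1) (by omega) (by positivity), zero_add,
    show ((k : ℤ) + 1 - 1) = (k : ℤ) by ring] at this
  exact this

end Aux

/-- Splitting identity for complete homogeneous symmetric polynomials:
for `0 ≤ m ≤ ℓ₂ - ℓ₁`,
`h_n^⟨ℓ₁,ℓ₂⟩ = Σ_{j=0}^{m} h_{n-j}^⟨ℓ₁+m-j,ℓ₂⟩ · h_j^⟨ℓ₁,ℓ₁+m-j⟩`. -/
theorem hpoly_splitting (R : Type*) [CommRing R] (ℓ₁ ℓ₂ : ℕ)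
    (h1 : 1 ≤ ℓ₁) (h12 : ℓ₁ < ℓ₂) (m : ℕ) (hm : m ≤ ℓ₂ - ℓ₁) (n : ℤ) :
    hpoly R ℓ₁ ℓ₂ n
      = ∑ j ∈ Finset.range (m + 1),
          hpoly R (ℓ₁ + m - j) ℓ₂ (n - (j : ℤ)) *
            hpoly R ℓ₁ (ℓ₁ + m - j) (j : ℤ) := by
  induction m with
  | zero =>
      simp [hpoly_zero]
  | succ m ih =>
      have hm' : m ≤ ℓ₂ - ℓ₁ := by omega
      rw [Finset.sum_range_succ, ih hm']
      have hA : ∀ j ∈ Finset.range (m + 1),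
          hpoly R (ℓ₁ + m - j) ℓ₂ (n - (j : ℤ)) * hpoly R ℓ₁ (ℓ₁ + m - j) (j : ℤ)
            = hpoly R (ℓ₁ + (m + 1) - j) ℓ₂ (n - (j : ℤ)) * hpoly R ℓ₁ (ℓ₁ + m - j) (j : ℤ)
              + MvPolynomial.X (ℓ₁ + m - j) * hpoly R (ℓ₁ + m - j) ℓ₂ (n - (j : ℤ) - 1)
                * hpoly R ℓ₁ (ℓ₁ + m - j) (j : ℤ) := by
        intro j hj
        rw [Finset.mem_range] at hj
        have e : ℓ₁ + (m + 1) - j = (ℓ₁ + m - j) + 1 := by omega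
        rw [e, hpoly_recA (by omega) (n - (j : ℤ))]
        ring
      have hB : ∀ j ∈ Finset.range (m + 1),
          hpoly R (ℓ₁ + (m + 1) - j) ℓ₂ (n - (j : ℤ)) * hpoly R ℓ₁ (ℓ₁ + (m + 1) - j) (j : ℤ)
            = hpoly R (ℓ₁ + (m + 1) - j) ℓ₂ (n - (j : ℤ)) * hpoly R ℓ₁ (ℓ₁ + m - j) (j : ℤ)
              + hpoly R (ℓ₁ + (m + 1) - j) ℓ₂ (n - (j : ℤ))
                * MvPolynomial.X (ℓ₁ + (m + 1) - j)
                * hpoly R ℓ₁ (ℓ₁ + (m + 1) - j) ((j : ℤ) - 1) := by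
        intro j hj
        rw [Finset.mem_range] at hj
        have e : ℓ₁ + (m + 1) - j = (ℓ₁ + m - j) + 1 := by omega
        rw [e, hpoly_recB (by omega) (j : ℤ)]
        ring
      rw [Finset.sum_congr rfl hA, Finset.sum_congr rfl hB, Finset.sum_add_distrib,
        Finset.sum_add_distrib]
      have hST :
          (∑ j ∈ Finset.range (m + 1),
              MvPolynomial.X (ℓ₁ + m - j) * hpoly R (ℓ₁ + m - j) ℓ₂ (n - (j : ℤ) - 1)
                * hpoly R ℓ₁ (ℓ₁ + m - j) (j : ℤ))
            = (∑ j ∈ Finset.range (m + 1),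
                hpoly R (ℓ₁ + (m + 1) - j) ℓ₂ (n - (j : ℤ))
                  * MvPolynomial.X (ℓ₁ + (m + 1) - j)
                  * hpoly R ℓ₁ (ℓ₁ + (m + 1) - j) ((j : ℤ) - 1))
              + hpoly R (ℓ₁ + (m + 1) - (m + 1)) ℓ₂ (n - ((m + 1 : ℕ) : ℤ))
                * hpoly R ℓ₁ (ℓ₁ + (m + 1) - (m + 1)) ((m + 1 : ℕ) : ℤ) := by
        rw [Finset.sum_range_succ, Finset.sum_range_succ']
        have hgf : ∀ i ∈ Finset.range m,
            MvPolynomial.X (ℓ₁ + m - i) * hpoly R (ℓ₁ + m - i) ℓ₂ (n - (i : ℤ) - 1)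
                * hpoly R ℓ₁ (ℓ₁ + m - i) (i : ℤ)
              = hpoly R (ℓ₁ + (m + 1) - (i + 1)) ℓ₂ (n - ((i + 1 : ℕ) : ℤ))
                  * MvPolynomial.X (ℓ₁ + (m + 1) - (i + 1))
                  * hpoly R ℓ₁ (ℓ₁ + (m + 1) - (i + 1)) (((i + 1 : ℕ) : ℤ) - 1) := by
          intro i hi
          rw [Finset.mem_range] at hi
          have e : ℓ₁ + (m + 1) - (i + 1) = ℓ₁ + m - i := by omega
          have e3 : n - ((i + 1 : ℕ) : ℤ) = n - (i : ℤ) - 1 := by push_cast; ring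
          have e4 : ((i + 1 : ℕ) : ℤ) - 1 = (i : ℤ) := by push_cast; ring
          rw [e, e3, e4]
          ring
        rw [Finset.sum_congr rfl hgf]
        have h0 : hpoly R ℓ₁ (ℓ₁ + (m + 1) - 0) (((0 : ℕ) : ℤ) - 1) = 0 :=
          hpoly_neg (by norm_num)
        have hgm : MvPolynomial.X (ℓ₁ + m - m) * hpoly R (ℓ₁ + m - m) ℓ₂ (n - (m : ℤ) - 1)
              * hpoly R ℓ₁ (ℓ₁ + m - m) (m : ℤ)
            = hpoly R (ℓ₁ + (m + 1) - (m + 1)) ℓ₂ (n - ((m + 1 : ℕ) : ℤ))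
              * hpoly R ℓ₁ (ℓ₁ + (m + 1) - (m + 1)) ((m + 1 : ℕ) : ℤ) := by
          have e : ℓ₁ + m - m = ℓ₁ := by omega
          have e' : ℓ₁ + (m + 1) - (m + 1) = ℓ₁ := by omega
          have e5 : n - ((m + 1 : ℕ) : ℤ) = n - (m : ℤ) - 1 := by push_cast; ring
          have e6 : ((m + 1 : ℕ) : ℤ) = (m : ℤ) + 1 := by push_cast; ring
          rw [e, e', e5, e6, hpoly_diag_succ]
          ring
        rw [h0, hgm]
        ring
      rw [hST]
      ring
end

section
/- Let g ≥ 1, let μ = (μ_1 ≥ … ≥ μ_g ≥ 0) be a partition with at most g parts, and fix k with 1 ≤ k ≤ g. Then in ℤ[t_1, …, t_g] one has det(t_j^{μ_i+g−i})_{1≤i,j≤g} = (∏_{1≤i<j≤g}(t_i − t_j)) · det(M), where M is the g×g matrix whose (i,j) entry is h_{μ_i+j−i}^{⟨1,g⟩} (complete homogeneous in all variables t_1,…,t_g) if j ≤ k, and is h_{μ_i+j−i}^{⟨k+1,g⟩} (complete homogeneous in t_{k+1},…,t_g only) if j > k. -/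
/-!
Everything rests on the identity `∏_{i ∈ s} (1 - t_i z) · ∏_{i ∈ t} (1 - t_i z)⁻¹ =
∏_{i ∈ t \ s} (1 - t_i z)⁻¹` of generating functions for `s ⊆ t`, read off at `z^n`:
`∑_r (-1)^r e_r(s) h_{n-r}(t) = h_n(t \ s)`.

Taking `t = {t_1, …, t_g}` and `s = t \ {t_j}` gives `t_j^λ` as a combination of the `h_{λ-r}`,
which factors the alternant as `A = H · B`, where `H = (h_{μ_i+c-i})` is the Jacobi–Trudi matrix
and `B` does not depend on `μ`. For `μ = 0` the matrix `H` is unitriangular, so `det B` is the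
Vandermonde determinant. Taking `s = {t_1, …, t_k}` instead shows that each column `j > k` of
the split matrix is `H` times a column supported on rows `≤ j` with diagonal entry `1`, so the
split matrix is `H · C` with `C` unitriangular.
-/

open Finset Matrix MvPolynomial

namespace MvPolynomial

variable {σ R : Type*} [CommRing R]

noncomputable def esymmOn (s : Finset σ) (r : ℕ) : MvPolynomial σ R :=
  ∑ t ∈ s.powersetCard r, ∏ i ∈ t, X i

theorem esymmOn_zero (s : Finset σ) : esymmOn (R := R) s 0 = 1 := by
  simp [esymmOn]

theorem esymmOn_of_card_lt {s : Finset σ} {r : ℕ} (h : s.card < r) :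
    esymmOn (R := R) s r = 0 := by
  rw [esymmOn, powersetCard_eq_empty.2 h, sum_empty]

variable [DecidableEq σ]

noncomputable def hsymmOn (s : Finset σ) (n : ℤ) : MvPolynomial σ R :=
  if 0 ≤ n then ∑ d ∈ s.sym n.toNat, (d.1.map X).prod else 0

theorem hsymmOn_of_neg (s : Finset σ) {n : ℤ} (hn : n < 0) : hsymmOn (R := R) s n = 0 :=
  if_neg hn.not_ge

@[simp]
theorem hsymmOn_zero (s : Finset σ) : hsymmOn (R := R) s 0 = 1 := by
  rw [hsymmOn, if_pos le_rfl, Int.toNat_zero, sym_zero, sum_singleton]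
  rfl

theorem hsymmOn_singleton (a : σ) (m : ℕ) : hsymmOn (R := R) {a} m = X a ^ m := by
  rw [hsymmOn, if_pos (Nat.cast_nonneg m), Int.toNat_natCast, sym_singleton, sum_singleton]
  simp [Sym.replicate]

theorem hsymmOn_natCast_succ {s : Finset σ} {a : σ} (ha : a ∈ s) (m : ℕ) :
    hsymmOn (R := R) s (m + 1 : ℕ) = hsymmOn (s.erase a) (m + 1 : ℕ) + X a * hsymmOn s m := by
  have h_notMem : (s.sym (m + 1)).filter (a ∉ ·) = (s.erase a).sym (m + 1) := by
    ext d
    simp only [mem_filter, mem_sym_iff, mem_erase]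
    exact ⟨fun h x hx => ⟨fun he => h.2 (he ▸ hx), h.1 x hx⟩,
      fun h => ⟨fun x hx => (h x hx).2, fun hd => (h a hd).1 rfl⟩⟩
  have h_mem : (s.sym (m + 1)).filter (a ∈ ·) = (s.sym m).image (a ::ₛ ·) := by
    ext d
    simp only [mem_filter, mem_sym_iff, mem_image]
    refine ⟨fun ⟨hd, had⟩ => ⟨d.erase a had, fun x hx => hd x ?_, Sym.cons_erase had⟩,
      ?_⟩
    · have hx' : x ∈ (d.erase a had : Multiset σ) := hx
      rw [Sym.coe_erase] at hx'
      exact Multiset.mem_of_mem_erase hx'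
    · rintro ⟨d, hd, rfl⟩
      exact ⟨fun x hx => (Sym.mem_cons.1 hx).elim (· ▸ ha) (hd x), Sym.mem_cons_self a d⟩
  simp only [hsymmOn, Nat.cast_nonneg, if_true, Int.toNat_natCast]
  rw [← sum_filter_not_add_sum_filter _ (a ∈ ·), h_notMem, h_mem,
    sum_image fun _ _ _ _ => (Sym.cons_inj_right a _ _).1, mul_sum]
  simp [Sym.coe_cons]

theorem hsymmOn_erase {s : Finset σ} {a : σ} (ha : a ∈ s) (n : ℤ) :
    hsymmOn (R := R) (s.erase a) n = hsymmOn s n - X a * hsymmOn s (n - 1) := by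
  obtain hn | rfl | hn := lt_trichotomy n 0
  · simp [hsymmOn_of_neg _ hn, hsymmOn_of_neg _ (by omega : n - 1 < 0)]
  · rw [hsymmOn_of_neg s (by norm_num : (0 : ℤ) - 1 < 0)]
    simp
  · obtain ⟨m, rfl⟩ : ∃ m : ℕ, n = (m + 1 : ℕ) := ⟨n.toNat - 1, by omega⟩
    rw [hsymmOn_natCast_succ ha, show ((m + 1 : ℕ) : ℤ) - 1 = m by push_cast; ring]
    ring

theorem sum_powerset_neg_one_pow_mul_hsymmOn {s t : Finset σ} (hst : s ⊆ t) (n : ℤ) :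
    ∑ u ∈ s.powerset, (-1) ^ u.card * (∏ i ∈ u, X i) * hsymmOn (R := R) t (n - u.card) =
      hsymmOn (t \ s) n := by
  induction s using Finset.induction_on generalizing n with
  | empty => simp
  | @insert a s ha ih =>
    have hs : s ⊆ t := (subset_insert a s).trans hst
    have hat : a ∈ t \ s := mem_sdiff.2 ⟨hst (mem_insert_self a s), ha⟩
    have h_insert : ∀ u ∈ s.powerset,
        (-1) ^ (insert a u).card * (∏ i ∈ insert a u, X i) *
            hsymmOn (R := R) t (n - (insert a u).card) =
          -X a * ((-1) ^ u.card * (∏ i ∈ u, X i) * hsymmOn t (n - 1 - u.card)) := by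
      intro u hu
      have hau : a ∉ u := fun h => ha (mem_powerset.1 hu h)
      rw [card_insert_of_notMem hau, prod_insert hau, Nat.cast_succ, sub_add_eq_sub_sub_swap]
      ring
    rw [sum_powerset_insert ha, sum_congr rfl h_insert, ← mul_sum, ih hs, ih hs, sdiff_insert,
      hsymmOn_erase hat]
    ring

theorem sum_range_neg_one_pow_mul_esymmOn_mul_hsymmOn {s t : Finset σ} (hst : s ⊆ t) (n : ℤ)
    {B : ℕ} (hB : s.card < B) :
    ∑ r ∈ range B, (-1) ^ r * esymmOn (R := R) s r * hsymmOn t (n - r) = hsymmOn (t \ s) n := by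
  rw [← sum_powerset_neg_one_pow_mul_hsymmOn hst, sum_powerset,
    ← sum_subset (range_subset_range.2 hB) fun r _ hr => ?_]
  · refine sum_congr rfl fun r _ => ?_
    rw [esymmOn, mul_sum, sum_mul]
    refine sum_congr rfl fun u hu => ?_
    rw [(mem_powersetCard.1 hu).2]
  · rw [esymmOn_of_card_lt (by simpa using hr), mul_zero, zero_mul]

end MvPolynomial

theorem det_of_pow_sub_one_sub {R : Type*} [CommRing R] (g : ℕ) (v : ℕ → R) :
    det (of fun i j : Fin g => v (j + 1) ^ (g - 1 - i)) =
      ∏ j ∈ Icc 1 g, ∏ i ∈ Ico 1 j, (v i - v j) := by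
  have h_vandermonde : (of fun i j : Fin g => v (j + 1) ^ (g - 1 - i)).submatrix
      Fin.revPerm Fin.revPerm = (vandermonde fun i : Fin g => v (g - i))ᵀ := by
    ext i j
    simp only [submatrix_apply, of_apply, transpose_apply, vandermonde_apply, Fin.revPerm_apply,
      Fin.val_rev]
    congr 2 <;> omega
  have h_outer : ∏ j ∈ Icc 1 g, ∏ i ∈ Ico 1 j, (v i - v j) =
      ∏ m ∈ range g, ∏ i ∈ Ico 1 (g - m), (v i - v (g - m)) :=
    prod_nbij' (g - ·) (g - ·) (by simp; omega) (by simp; omega) (by simp; omega)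
      (by simp; omega) fun b hb => by rw [Nat.sub_sub_self (mem_Icc.1 hb).2]
  have h_inner (m : ℕ) : ∏ i ∈ Ico 1 (g - m), (v i - v (g - m)) =
      ∏ j ∈ Ioo m g, (v (g - j) - v (g - m)) :=
    prod_nbij' (g - ·) (g - ·) (by simp; omega) (by simp; omega) (by simp; omega)
      (by simp; omega) fun a ha => by rw [Nat.sub_sub_self (by simp at ha; omega)]
  rw [← det_submatrix_equiv_self Fin.revPerm, h_vandermonde, det_transpose, det_vandermonde,
    h_outer, prod_congr rfl fun m _ => h_inner m,
    ← Fin.prod_univ_eq_prod_range fun m => ∏ j ∈ Ioo m g, (v (g - j) - v (g - m))]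
  refine prod_congr rfl fun i _ => ?_
  rw [← Fin.map_valEmbedding_Ioi, prod_map]
  rfl

section JacobiTrudi

variable {R : Type*} [CommRing R]

theorem hpoly_eq_hsymmOn (a b : ℕ) : hpoly R a b = hsymmOn (Icc a b) := rfl

variable (R) in
noncomputable def jacobiTrudiMatrix (g : ℕ) (a : Fin g → ℤ) :
    Matrix (Fin g) (Fin g) (MvPolynomial ℕ R) :=
  of fun i c => hpoly R 1 g (a i + c)

variable (R) in
/-- Column `j` holds the coefficients of `∏_{l ≠ j + 1} (z - t_l)`, the entry in row `c` being
that of `z^c`. -/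
noncomputable def esymmComplMatrix (g : ℕ) : Matrix (Fin g) (Fin g) (MvPolynomial ℕ R) :=
  of fun c j => (-1) ^ (g - 1 - c.val) * esymmOn ((Icc 1 g).erase (j.val + 1)) (g - 1 - c.val)

variable (R) in
noncomputable def splitMatrix (g k : ℕ) : Matrix (Fin g) (Fin g) (MvPolynomial ℕ R) :=
  of fun c j => if j.val + 1 ≤ k then (1 : Matrix (Fin g) (Fin g) (MvPolynomial ℕ R)) c j
    else if c.val ≤ j.val then (-1) ^ (j.val - c.val) * esymmOn (Icc 1 k) (j.val - c.val) else 0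

theorem jacobiTrudiMatrix_mul_esymmComplMatrix {g : ℕ} (e : Fin g → ℕ) :
    jacobiTrudiMatrix R g (fun i => e i + 1 - g) * esymmComplMatrix R g =
      of fun i j => X (j.val + 1) ^ e i := by
  ext i j : 1
  have hj : j.val + 1 ∈ Icc 1 g := by simp
  have := j.isLt
  set S := (Icc 1 g).erase (j.val + 1) with hS
  have h_rev (c : Fin g) :
      hpoly R 1 g (e i + 1 - g + (Fin.rev c : ℕ)) *
          ((-1) ^ (g - 1 - (Fin.rev c : ℕ)) * esymmOn S (g - 1 - (Fin.rev c : ℕ))) =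
        (-1) ^ (c : ℕ) * esymmOn S c * hsymmOn (Icc 1 g) (e i - c) := by
    rw [Fin.val_rev, show g - 1 - (g - (c + 1)) = c by omega, hpoly_eq_hsymmOn,
      show (e i : ℤ) + 1 - g + (g - (c + 1) : ℕ) = e i - c by omega]
    ring
  rw [mul_apply, ← Equiv.sum_comp Fin.revPerm]
  simp only [jacobiTrudiMatrix, esymmComplMatrix, of_apply, Fin.revPerm_apply, ← hS, h_rev]
  rw [Fin.sum_univ_eq_sum_range (fun c => (-1) ^ c * esymmOn S c * hsymmOn (Icc 1 g) (e i - c)),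
    sum_range_neg_one_pow_mul_esymmOn_mul_hsymmOn (erase_subset _ _) _
      (by rw [card_erase_of_mem hj, Nat.card_Icc]; omega),
    sdiff_erase_self hj, hsymmOn_singleton]

theorem det_jacobiTrudiMatrix_neg_val (g : ℕ) :
    det (jacobiTrudiMatrix R g fun i => -i) = 1 := by
  rw [det_of_isUpperTriangular (M := jacobiTrudiMatrix R g fun i => -i)
    fun i c (hci : c < i) => hsymmOn_of_neg (Icc 1 g) <| by
      show -(i.val : ℤ) + c.val < 0
      have := Fin.lt_def.1 hci
      omega]
  exact prod_eq_one fun i _ => by simp [jacobiTrudiMatrix, hpoly_eq_hsymmOn]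

theorem det_esymmComplMatrix (g : ℕ) :
    det (esymmComplMatrix R g) = ∏ j ∈ Icc 1 g, ∏ i ∈ Ico 1 j, (X i - X j) := by
  have h := congrArg det
    (jacobiTrudiMatrix_mul_esymmComplMatrix (R := R) fun i : Fin g => g - 1 - i)
  have h_staircase : (fun i : Fin g => ((g - 1 - i : ℕ) : ℤ) + 1 - g) =
      fun i : Fin g => -((i : ℕ) : ℤ) := by
    funext i
    omega
  rw [det_mul, h_staircase, det_jacobiTrudiMatrix_neg_val, one_mul] at h
  rw [h, det_of_pow_sub_one_sub]

theorem det_splitMatrix (g k : ℕ) : det (splitMatrix R g k) = 1 := by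
  rw [det_of_isUpperTriangular fun c j (hjc : j < c) => ?_]
  · exact prod_eq_one fun c _ => by simp [splitMatrix, esymmOn_zero]
  · simp [splitMatrix, hjc.ne', hjc.not_ge]

theorem jacobiTrudiMatrix_mul_splitMatrix {g : ℕ} (k : ℕ) (a : Fin g → ℤ) :
    jacobiTrudiMatrix R g a * splitMatrix R g k = of fun i j : Fin g =>
      if j.val + 1 ≤ k then hpoly R 1 g (a i + j) else hpoly R (k + 1) g (a i + j) := by
  ext i j : 1
  rw [mul_apply, of_apply]
  split_ifs with hj
  · simp only [jacobiTrudiMatrix, splitMatrix, of_apply, if_pos hj, one_apply, mul_ite, mul_one,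
      mul_zero, sum_ite_eq', mem_univ, if_true]
  have := j.isLt
  have h_diff : Icc 1 g \ Icc 1 k = Icc (k + 1) g := by
    ext x
    simp only [mem_sdiff, mem_Icc]
    omega
  have h_term (r : ℕ) (hr : r ∈ range (j.val + 1)) :
      hpoly R 1 g (a i + ↑(j.val + 1 - 1 - r)) *
          (if j.val + 1 - 1 - r ≤ j.val then
            (-1) ^ (j.val - (j.val + 1 - 1 - r)) * esymmOn (Icc 1 k) (j.val - (j.val + 1 - 1 - r))
          else 0) =
        (-1) ^ r * esymmOn (Icc 1 k) r * hsymmOn (Icc 1 g) (a i + j - r) := by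
    have hr := mem_range.1 hr
    rw [if_pos (by omega), show j.val - (j.val + 1 - 1 - r) = r by omega, hpoly_eq_hsymmOn,
      show a i + ((j.val + 1 - 1 - r : ℕ) : ℤ) = a i + j - r by omega]
    ring
  simp only [jacobiTrudiMatrix, splitMatrix, of_apply, if_neg hj]
  rw [Fin.sum_univ_eq_sum_range (fun c => hpoly R 1 g (a i + c) *
      if c ≤ j.val then (-1) ^ (j.val - c) * esymmOn (Icc 1 k) (j.val - c) else 0),
    ← sum_subset (range_subset_range.2 this) fun c _ hc => by simp at hc; simp [hc],
    ← sum_range_reflect, sum_congr rfl h_term,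
    sum_range_neg_one_pow_mul_esymmOn_mul_hsymmOn (Icc_subset_Icc_right (by omega)) _
      (by simp; omega), h_diff, hpoly_eq_hsymmOn]

end JacobiTrudi

theorem split_jacobi_trudi_general (g : ℕ) (μ : ℕ → ℕ)
    (k : ℕ) :
    Matrix.det (Matrix.of fun i j : Fin g =>
        (MvPolynomial.X (j.val + 1) : MvPolynomial ℕ ℤ)
          ^ (μ (i.val + 1) + g - (i.val + 1)))
      = (∏ j ∈ Finset.Icc 1 g, ∏ i ∈ Finset.Ico 1 j,
            (MvPolynomial.X i - MvPolynomial.X j)) *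
        Matrix.det (Matrix.of fun i j : Fin g =>
          if j.val + 1 ≤ k then
            hpoly ℤ 1 g ((μ (i.val + 1) : ℤ) + (j.val + 1) - (i.val + 1))
          else
            hpoly ℤ (k + 1) g
              ((μ (i.val + 1) : ℤ) + (j.val + 1) - (i.val + 1))) := by
  let a : Fin g → ℤ := fun i => μ (i.val + 1) - i.val
  have h_alternant : (of fun i j : Fin g => (X (j.val + 1) : MvPolynomial ℕ ℤ) ^
      (μ (i.val + 1) + g - (i.val + 1))) = jacobiTrudiMatrix ℤ g a * esymmComplMatrix ℤ g := by
    have ha : a = fun i => ((μ (i.val + 1) + g - (i.val + 1) : ℕ) : ℤ) + 1 - g := by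
      funext i
      have := i.isLt
      simp only [a]
      omega
    rw [ha, jacobiTrudiMatrix_mul_esymmComplMatrix]
  have h_split : (of fun i j : Fin g => if j.val + 1 ≤ k then
      hpoly ℤ 1 g ((μ (i.val + 1) : ℤ) + (j.val + 1) - (i.val + 1))
      else hpoly ℤ (k + 1) g ((μ (i.val + 1) : ℤ) + (j.val + 1) - (i.val + 1))) =
      jacobiTrudiMatrix ℤ g a * splitMatrix ℤ g k := by
    rw [jacobiTrudiMatrix_mul_splitMatrix]
    ext i j : 1
    simp only [of_apply, a]
    ring_nf
  rw [h_alternant, h_split, det_mul, det_mul, det_esymmComplMatrix, det_splitMatrix, mul_one,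
    mul_comm]

/-- Modified (split) Jacobi–Trudi identity: for a partition `μ` with at most
`g` parts and `1 ≤ k ≤ g`,
`det(t_j^{μ_i+g-i}) = (∏_{i<j}(t_i - t_j)) · det M` where the `(i,j)` entry of
`M` is `h_{μ_i+j-i}^⟨1,g⟩` (in all variables) for `j ≤ k` and
`h_{μ_i+j-i}^⟨k+1,g⟩` (in `t_{k+1}, …, t_g` only) for `j > k`. -/
theorem split_jacobi_trudi (g : ℕ) (hg : 1 ≤ g) (μ : ℕ → ℕ)
    (hmono : ∀ i j : ℕ, 1 ≤ i → i ≤ j → j ≤ g → μ j ≤ μ i)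
    (k : ℕ) (hk1 : 1 ≤ k) (hkg : k ≤ g) :
    Matrix.det (Matrix.of fun i j : Fin g =>
        (MvPolynomial.X (j.val + 1) : MvPolynomial ℕ ℤ)
          ^ (μ (i.val + 1) + g - (i.val + 1)))
      = (∏ j ∈ Finset.Icc 1 g, ∏ i ∈ Finset.Ico 1 j,
            (MvPolynomial.X i - MvPolynomial.X j)) *
        Matrix.det (Matrix.of fun i j : Fin g =>
          if j.val + 1 ≤ k then
            hpoly ℤ 1 g ((μ (i.val + 1) : ℤ) + (j.val + 1) - (i.val + 1))
          else
            hpoly ℤ (k + 1) g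
              ((μ (i.val + 1) : ℤ) + (j.val + 1) - (i.val + 1))) :=
  split_jacobi_trudi_general g μ k
end

section
/- Let r and s be coprime integers with 2 ≤ r < s, g = (r−1)(s−1)/2, N the increasing enumeration of the numerical semigroup generated by r and s, and Λ_i = g − N(i−1) + (i−1) for i = 1, …, g. Then for every k with 0 ≤ k ≤ g−1, setting n_k = #{ℓ ∈ ℕ : N(ℓ) ≤ g−k−1}, one has Σ_{ℓ=0}^{n_k−1} (2g − N(ℓ) − N(k+ℓ) − 1) = Σ_{i=k+1}^{g} Λ_i = Σ_{i=k}^{g−1} (g − N(i) + i). -/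
/-- `nkDef g k N = #{ℓ : N ℓ ≤ g - k - 1}`. -/
noncomputable def nkDef (g k : ℕ) (N : ℕ → ℕ) : ℕ :=
  Set.ncard {ℓ : ℕ | N ℓ ≤ g - k - 1}

open Finset

/-- Symmetry of a numerical semigroup with Frobenius number `2 * g - 1`. -/
def IsSymmetricOfGenus (P : ℕ → Prop) (g : ℕ) : Prop :=
  ∀ m n, m + n + 1 = 2 * g → (P m ↔ ¬ P n)

section TwoGenerators

variable {r s : ℕ}

lemma exists_lt_mul_modEq (hco : Nat.Coprime r s) (hr : 0 < r) (m : ℕ) :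
    ∃ b < r, b * s ≡ m [MOD r] := by
  have : NeZero r := ⟨hr.ne'⟩
  refine ⟨((m : ZMod r) * (s : ZMod r)⁻¹).val, ZMod.val_lt _, ?_⟩
  rw [← ZMod.natCast_eq_natCast_iff, Nat.cast_mul, ZMod.natCast_zmod_val, mul_assoc,
    mul_comm _ (s : ZMod r), ZMod.coe_mul_inv_eq_one s hco.symm, mul_one]

theorem inSg_iff_mul_le (hco : Nat.Coprime r s) {b m : ℕ} (hb : b < r)
    (hbm : b * s ≡ m [MOD r]) : inSg r s m ↔ b * s ≤ m := by
  constructor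
  · rintro ⟨a, c, rfl⟩
    have hcs : c * s ≡ a * r + c * s [MOD r] := (Nat.mul_add_mod_self_right a r (c * s)).symm
    have hcb : c ≡ b [MOD r] := Nat.ModEq.cancel_right_of_coprime hco (hcs.trans hbm.symm)
    have hbc : b ≤ c := by
      rw [← Nat.mod_eq_of_lt hb, ← hcb]
      exact Nat.mod_le c r
    nlinarith
  · intro hle
    obtain ⟨q, hq⟩ := (Nat.modEq_iff_dvd' hle).mp hbm
    exact ⟨q, b, by rw [mul_comm q, ← hq, Nat.sub_add_cancel hle]⟩

theorem inSg_iff_not_inSg (hco : Nat.Coprime r s) (hr : 0 < r) {m n : ℕ}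
    (h : m + n + r + s = r * s) : inSg r s m ↔ ¬ inSg r s n := by
  obtain ⟨b, hb, hbm⟩ := exists_lt_mul_modEq hco hr m
  obtain ⟨c, rfl⟩ : ∃ c, r = c + b + 1 := ⟨r - b - 1, by omega⟩
  have hsum : c * s + b * s = n + m + (c + b + 1) := by nlinarith
  have hcn : c * s ≡ n [MOD c + b + 1] :=
    Nat.ModEq.add_right_cancel hbm (hsum ▸ Nat.add_modEq_right)
  rw [inSg_iff_mul_le hco hb hbm, inSg_iff_mul_le hco (by omega) hcn, not_le]
  exact ⟨fun _ => by omega, fun hlt => hbm.le_of_lt_add (by omega)⟩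

theorem isSymmetricOfGenus_inSg {g : ℕ} (hco : Nat.Coprime r s) (hr : 0 < r)
    (hg : 2 * g = (r - 1) * (s - 1)) : IsSymmetricOfGenus (inSg r s) g := by
  intro m n hmn
  refine inSg_iff_not_inSg hco hr ?_
  obtain ⟨r, rfl⟩ : ∃ r', r = r' + 1 := ⟨r - 1, by omega⟩
  rcases s with _ | s
  · rw [Nat.zero_sub, mul_zero] at hg
    omega
  · simp only [Nat.add_sub_cancel] at hg
    nlinarith

end TwoGenerators

lemma sum_range_shift_telescope (c : ℤ) (N : ℕ → ℕ) (k M : ℕ) :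
    ∑ ℓ ∈ range M, (c - N ℓ - N (k + ℓ) - 1)
      = ∑ ℓ ∈ range M, (c - N ℓ - N (k + 1 + ℓ) - 1) + N (k + M) - N k := by
  induction M with
  | zero => simp
  | succ M ih =>
    rw [sum_range_succ, sum_range_succ, ih, show k + 1 + M = k + (M + 1) by omega]
    ring

lemma sum_Icc_Lam_eq_sum_Ico {g : ℕ} {N : ℕ → ℕ} (hN : ∀ i < g, N i ≤ g + i) (k : ℕ) :
    ∑ i ∈ Icc (k + 1) g, (Lam g N i : ℤ) = ∑ i ∈ Ico k g, ((g : ℤ) - N i + i) := by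
  rw [← Ico_add_one_right_eq_Icc, ← sum_Ico_add']
  refine sum_congr rfl fun i hi => ?_
  simp only [Lam, Nat.add_sub_cancel]
  rw [Nat.cast_sub (hN i (mem_Ico.mp hi).2)]
  push_cast
  ring

noncomputable def vanishingOrder (P : ℕ → Prop) [DecidablePred P] (g k : ℕ) : ℤ :=
  ∑ ℓ ∈ range (Nat.count P (g - k)), ((2 * g : ℤ) - Nat.nth P ℓ - Nat.nth P (k + ℓ) - 1)

lemma nkDef_nth {P : ℕ → Prop} [DecidablePred P] (hinf : (Set.ofPred P).Infinite) {g k : ℕ}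
    (hk : k < g) : nkDef g k (Nat.nth P) = Nat.count P (g - k) := by
  have hset : {ℓ | Nat.nth P ℓ ≤ g - k - 1} = ↑(range (Nat.count P (g - k))) := by
    ext ℓ
    rw [Set.mem_ofPred_eq, coe_range, Set.mem_Iio, Nat.lt_nth_iff_count_lt hinf]
    omega
  rw [nkDef, hset, Set.ncard_coe_finset, card_range]

lemma eq_nth_of_strictMono {P : ℕ → Prop} {N : ℕ → ℕ} (hN : StrictMono N) (hmem : ∀ n, P (N n))
    (hsurj : ∀ m, P m → ∃ n, N n = m) : N = Nat.nth P := by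
  have hinf : (Set.ofPred P).Infinite := Set.infinite_of_injective_forall_mem hN.injective hmem
  funext n
  refine Nat.eq_nth_of_strictMonoOn_of_mapsTo_of_surjOn N ?_ (fun n _ => hmem n)
    (hN.strictMonoOn _) (fun hf => (hinf hf).elim)
  intro m hm
  obtain ⟨n, rfl⟩ := hsurj m hm
  exact ⟨n, fun hf => (hinf hf).elim, rfl⟩

namespace IsSymmetricOfGenus

variable {P : ℕ → Prop} {g : ℕ}

lemma shift (h : IsSymmetricOfGenus P g) {k : ℕ} (hk : k ≤ g) :
    IsSymmetricOfGenus (fun i => P (g - k + i)) k :=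
  fun m n hmn => h _ _ (by omega)

variable [DecidablePred P]

theorem count_two_mul (h : IsSymmetricOfGenus P g) : Nat.count P (2 * g) = g := by
  have hpair : ∀ i ∈ range (2 * g),
      (if P i then 1 else 0) + (if P (2 * g - 1 - i) then 1 else 0) = 1 := by
    intro i hi
    have := h i (2 * g - 1 - i) (by rw [mem_range] at hi; omega)
    split_ifs <;> tauto
  have htotal := sum_congr rfl hpair
  rw [sum_add_distrib, sum_range_reflect (fun i => if P i then 1 else 0), sum_const,
    card_range, smul_eq_mul, mul_one] at htotal
  rw [Nat.count_eq_card_filter_range, card_filter]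
  omega

theorem count_add_eq_count_sub_add (h : IsSymmetricOfGenus P g) {k : ℕ} (hk : k ≤ g) :
    Nat.count P (g + k) = Nat.count P (g - k) + k := by
  have := Nat.count_add P (g - k) (2 * k)
  rwa [(h.shift hk).count_two_mul, show g - k + 2 * k = g + k by omega] at this

theorem nth_le_add (h : IsSymmetricOfGenus P g) (hinf : (Set.ofPred P).Infinite) {i : ℕ}
    (hi : i < g) : Nat.nth P i ≤ g + i := by
  have := h.count_add_eq_count_sub_add (k := i + 1) hi
  refine Nat.lt_add_one_iff.mp ((Nat.lt_nth_iff_count_lt hinf (b := g + i + 1)).mp ?_)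
  rw [show g + i + 1 = g + (i + 1) by omega, this]
  omega

theorem vanishingOrder_eq_add (h : IsSymmetricOfGenus P g) {k : ℕ} (hk : k < g) :
    vanishingOrder P g k = ((g : ℤ) - Nat.nth P k + k) + vanishingOrder P g (k + 1) := by
  have hcount : g - k = g - (k + 1) + 1 := by omega
  unfold vanishingOrder
  rw [hcount, Nat.count_succ]
  -- The telescoping leaves `N (k + n)` with `n = count P (g - (k + 1))`; it is cancelled by the new
  -- summand `ℓ = n` if `g - k - 1 ∈ P`, and equals `g + k` by symmetry otherwise.
  by_cases hP : P (g - (k + 1))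
  · have hN : Nat.nth P (Nat.count P (g - (k + 1))) = g - (k + 1) := Nat.nth_count hP
    rw [if_pos hP, sum_range_succ, sum_range_shift_telescope, hN, Nat.cast_sub (by omega)]
    push_cast
    ring
  · have hPgk : P (g + k) := (h (g + k) (g - (k + 1)) (by omega)).mpr hP
    have hN : Nat.nth P (k + Nat.count P (g - (k + 1))) = g + k := by
      have hc := h.count_add_eq_count_sub_add hk.le
      rw [hcount, Nat.count_succ, if_neg hP, add_zero] at hc
      rw [add_comm, ← hc, Nat.nth_count hPgk]
    rw [if_neg hP, add_zero, sum_range_shift_telescope, hN]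
    push_cast
    ring

theorem vanishingOrder_eq_sum_Ico (h : IsSymmetricOfGenus P g) {k : ℕ} (hk : k ≤ g) :
    vanishingOrder P g k = ∑ i ∈ Ico k g, ((g : ℤ) - Nat.nth P i + i) := by
  induction hk using Nat.decreasingInduction with
  | self => simp [vanishingOrder]
  | of_succ k hk ih => rw [h.vanishingOrder_eq_add hk, ih, sum_eq_sum_Ico_succ_bot hk]

end IsSymmetricOfGenus

/-- The two expressions for the vanishing order `N_k`:
`Σ_{ℓ=0}^{n_k-1} (2g - N(ℓ) - N(k+ℓ) - 1) = Σ_{i=k+1}^{g} Λ_i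
 = Σ_{i=k}^{g-1} (g - N(i) + i)`. -/
theorem vanishing_order_identity (r s g : ℕ) (N : ℕ → ℕ)
    (hr : 2 ≤ r) (hrs : r < s) (hco : Nat.Coprime r s)
    (hg : 2 * g = (r - 1) * (s - 1))
    (hmono : StrictMono N)
    (hmem : ∀ n, inSg r s (N n))
    (hsurj : ∀ m, inSg r s m → ∃ n, N n = m)
    (k : ℕ) (hk : k ≤ g - 1) :
    (∑ ℓ ∈ Finset.range (nkDef g k N),
        ((2 * g : ℤ) - (N ℓ : ℤ) - (N (k + ℓ) : ℤ) - 1))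
      = ∑ i ∈ Finset.Icc (k + 1) g, (Lam g N i : ℤ) ∧
    (∑ i ∈ Finset.Icc (k + 1) g, (Lam g N i : ℤ))
      = ∑ i ∈ Finset.Ico k g, ((g : ℤ) - (N i : ℤ) + (i : ℤ)) := by
  classical
  have hkg : k < g := by
    have : 1 * 2 ≤ (r - 1) * (s - 1) := Nat.mul_le_mul (by omega) (by omega)
    omega
  have hinf : (Set.ofPred (inSg r s)).Infinite :=
    Set.infinite_of_injective_forall_mem hmono.injective hmem
  have hsymm := isSymmetricOfGenus_inSg hco (by omega) hg
  obtain rfl := eq_nth_of_strictMono hmono hmem hsurj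
  rw [sum_Icc_Lam_eq_sum_Ico (fun i hi => hsymm.nth_le_add hinf hi), nkDef_nth hinf hkg]
  exact ⟨hsymm.vanishingOrder_eq_sum_Ico hkg.le, rfl⟩
end

section
/- Let (r, s) = (2, 2g+1) with g ≥ 1 (the hyperelliptic case), let N be the increasing enumeration of the numerical semigroup generated by 2 and 2g+1, Λ_i = g − N(i−1) + (i−1) for i = 1, …, g, and fix k with 0 ≤ k < g. With n_k = #{ℓ ∈ ℕ : N(ℓ) ≤ g−k−1}, the characteristics (a_1, …, a_{n_k}; b_1, …, b_{n_k}) of Λ^{[k]} = (Λ_{k+1}, …, Λ_g), and ℓ_i the unique integer with Λ_{ℓ_i} + g − ℓ_i = a_i + b_i + 1, the index set {ℓ_1, …, ℓ_{n_k}} equals {ℓ ∈ ℤ : k+1 ≤ ℓ ≤ g and ℓ ≡ k+1 (mod 2)}. -/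
/-- The parts of the truncated partition `Λ^{[k]} = (Λ_{k+1}, …, Λ_g)`. -/
def muTr (g k : ℕ) (N : ℕ → ℕ) (j : ℕ) : ℕ :=
  if k + j ≤ g then Lam g N (k + j) else 0

/-- The conjugate partition of `Λ^{[k]}`: `μ'_j = #{i : μ_i ≥ j}`. -/
def muConj (g k : ℕ) (N : ℕ → ℕ) (j : ℕ) : ℕ :=
  ((Finset.Icc 1 (g - k)).filter (fun i => j ≤ muTr g k N i)).card

/-- Frobenius arm coordinates of `Λ^{[k]}` (rank `ρ = n_k`). -/
noncomputable def aChar (g k : ℕ) (N : ℕ → ℕ) (i : ℕ) : ℕ :=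
  muConj g k N (nkDef g k N + 1 - i) - (nkDef g k N + 1 - i)

/-- Frobenius leg coordinates of `Λ^{[k]}` (rank `ρ = n_k`). -/
noncomputable def bChar (g k : ℕ) (N : ℕ → ℕ) (i : ℕ) : ℕ :=
  muTr g k N (nkDef g k N + 1 - i) - (nkDef g k N + 1 - i)

lemma N_eq (g : ℕ) (N : ℕ → ℕ)
    (hmono : StrictMono N)
    (hmem : ∀ n, inSg 2 (2 * g + 1) (N n))
    (hsurj : ∀ m, inSg 2 (2 * g + 1) m → ∃ n, N n = m) :
    ∀ n, n ≤ g → N n = 2 * n := by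
  have hodd : ∀ x, inSg 2 (2*g+1) x → x % 2 = 1 → 2*g+1 ≤ x := by
    rintro x ⟨a, b, rfl⟩ hx
    rcases Nat.eq_zero_or_pos b with hb | hb
    · subst hb; omega
    · nlinarith
  intro n
  induction n with
  | zero =>
    intro _
    obtain ⟨m, hm⟩ := hsurj 0 ⟨0, 0, by ring⟩
    have := hmono.le_iff_le.mpr (Nat.zero_le m)
    omega
  | succ n ih =>
    intro hn
    have hNn := ih (by omega)
    obtain ⟨m, hm⟩ := hsurj (2*(n+1)) ⟨n+1, 0, by ring⟩
    have hmgt : n + 1 ≤ m := (hmono.lt_iff_lt (a := n) (b := m)).mp (by rw [hNn, hm]; omega)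
    have h1 : N (n+1) ≤ 2*(n+1) := hm ▸ hmono.le_iff_le.mpr hmgt
    have h2 : N n < N (n+1) := hmono (by omega)
    rcases Nat.even_or_odd (N (n+1)) with he | ho
    · have := Nat.even_iff.mp he; omega
    · have := hodd _ (hmem (n+1)) (Nat.odd_iff.mp ho)
      omega

lemma nk_eq (g k : ℕ) (N : ℕ → ℕ) (hg1 : 1 ≤ g) (hk : k < g)
    (hmono : StrictMono N) (hN : ∀ n, n ≤ g → N n = 2 * n) :
    nkDef g k N = (g - k - 1) / 2 + 1 := by
  have hset : {ℓ : ℕ | N ℓ ≤ g - k - 1} = ↑(Finset.Iic ((g - k - 1) / 2)) := by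
    ext ℓ
    simp only [Set.mem_setOf_eq, Finset.coe_Iic, Set.mem_Iic]
    constructor
    · intro h
      have hℓ : ℓ ≤ g := by
        by_contra h'
        have h2 : N g ≤ N ℓ := hmono.le_iff_le.mpr (by omega)
        rw [hN g le_rfl] at h2
        omega
      rw [hN ℓ hℓ] at h; omega
    · intro h
      rw [hN ℓ (by omega)]; omega
  rw [nkDef, hset, Set.ncard_coe_finset, Nat.card_Iic]

lemma muTr_eq (g k : ℕ) (N : ℕ → ℕ) (hN : ∀ n, n ≤ g → N n = 2 * n)
    (j : ℕ) (hj1 : 1 ≤ j) (hj2 : k + j ≤ g) :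
    muTr g k N j = g + 1 - (k + j) := by
  rw [muTr, if_pos hj2, Lam, hN (k + j - 1) (by omega)]
  omega

lemma muConj_eq (g k : ℕ) (N : ℕ → ℕ) (hN : ∀ n, n ≤ g → N n = 2 * n)
    (j : ℕ) (hj1 : 1 ≤ j) (hj2 : j ≤ g - k) :
    muConj g k N j = g - k + 1 - j := by
  rw [muConj]
  have hfe : (Finset.Icc 1 (g - k)).filter (fun i => j ≤ muTr g k N i)
      = Finset.Icc 1 (g - k + 1 - j) := by
    ext i
    simp only [Finset.mem_filter, Finset.mem_Icc]
    constructor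
    · rintro ⟨⟨h1, h2⟩, h3⟩
      rw [muTr_eq g k N hN i h1 (by omega)] at h3
      omega
    · rintro ⟨h1, h2⟩
      have h2' : i ≤ g - k := by omega
      rw [muTr_eq g k N hN i h1 (by omega)]
      omega
  rw [hfe, Nat.card_Icc]
  omega


/-- In the hyperelliptic case `(r, s) = (2, 2g+1)`, the index set
`{ℓ_1, …, ℓ_{n_k}}` determined by `Λ_{ℓ_i} + g - ℓ_i = a_i + b_i + 1` is
exactly `{ℓ : k+1 ≤ ℓ ≤ g, ℓ ≡ k+1 (mod 2)}`. -/
theorem hyperelliptic_natural_indices (g : ℕ) (N : ℕ → ℕ)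
    (hg1 : 1 ≤ g)
    (hmono : StrictMono N)
    (hmem : ∀ n, inSg 2 (2 * g + 1) (N n))
    (hsurj : ∀ m, inSg 2 (2 * g + 1) m → ∃ n, N n = m)
    (k : ℕ) (hk : k < g) :
    {ℓ : ℕ | ∃ i : ℕ, 1 ≤ i ∧ i ≤ nkDef g k N ∧
        k + 1 ≤ ℓ ∧ ℓ ≤ g ∧
        Lam g N ℓ + g - ℓ = aChar g k N i + bChar g k N i + 1}
      = {ℓ : ℕ | k + 1 ≤ ℓ ∧ ℓ ≤ g ∧ ℓ % 2 = (k + 1) % 2} := by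
  have hN := N_eq g N hmono hmem hsurj
  have hρ := nk_eq g k N hg1 hk hmono hN
  ext ℓ
  simp only [Set.mem_setOf_eq]
  constructor
  · rintro ⟨i, hi1, hi2, hℓ1, hℓ2, heq⟩
    refine ⟨hℓ1, hℓ2, ?_⟩
    set j := nkDef g k N + 1 - i with hj
    have hj1 : 1 ≤ j := by omega
    have hj2 : j ≤ nkDef g k N := by omega
    have ha : aChar g k N i = (g - k + 1 - j) - j := by
      rw [aChar, ← hj, muConj_eq g k N hN j hj1 (by omega)]
    have hb : bChar g k N i = (g + 1 - (k + j)) - j := by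
      rw [bChar, ← hj, muTr_eq g k N hN j hj1 (by omega)]
    have hLam : Lam g N ℓ = g + (ℓ - 1) - 2 * (ℓ - 1) := by
      rw [Lam, hN (ℓ - 1) (by omega)]
    omega
  · rintro ⟨hℓ1, hℓ2, hpar⟩
    set j := (ℓ - k + 1) / 2 with hjdef
    have hj1 : 1 ≤ j := by omega
    have hj2 : j ≤ nkDef g k N := by omega
    refine ⟨nkDef g k N + 1 - j, by omega, by omega, hℓ1, hℓ2, ?_⟩
    have hji : nkDef g k N + 1 - (nkDef g k N + 1 - j) = j := by omega
    have ha : aChar g k N (nkDef g k N + 1 - j) = (g - k + 1 - j) - j := by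
      rw [aChar, hji, muConj_eq g k N hN j hj1 (by omega)]
    have hb : bChar g k N (nkDef g k N + 1 - j) = (g + 1 - (k + j)) - j := by
      rw [bChar, hji, muTr_eq g k N hN j hj1 (by omega)]
    have hLam : Lam g N ℓ = g + (ℓ - 1) - 2 * (ℓ - 1) := by
      rw [Lam, hN (ℓ - 1) (by omega)]
    rw [ha, hb, hLam]
    omega
end
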